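/- Let Z = X + iY ∈ H₂ and let M ∈ Sp₄(ℤ). Then Im M(Z) is positive definite and m₂(Im M(Z)) ≤ (4/3)·max{ m₁(Y)⁻¹, m₂(Y) }. -/

import Mathlib

/-!
Write `Y = Im Z`, `P = CZ + D` and `Y' = Im M(Z)`. The symplectic relations give
`Pᴴ Y' P = Y` (as complex matrices), so `Y'` is positive definite and, for `u ∈ ℤ²`,
`|det P|² · Y'[u] = sᴴ Y s` with `s = adj(P) u = adj(Z) v + w`, where `v = adj(C) u` and
`w = adj(D) u` are integral. If `v = 0` then `s = w` is a nonzero lattice vector and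
`sᴴ Y s ≥ m₁(Y) ≥ det Y / m₂(Y)`; otherwise `Im s = adj(Y) v` alone contributes
`det Y · Y[(v₁, -v₀)] ≥ det Y · m₁(Y)`. As `|det P|² · det Y' = det Y`, this gives
`det Y' ≤ m₁(Y') · max{m₁(Y)⁻¹, m₂(Y)}`, and Hermite's inequality `m₁ m₂ ≤ (4/3) det` for
binary forms turns it into the bound on `m₂(Y')`.
-/

open Matrix

/-- The standard symplectic matrix `Ω = [[0, I₂],[−I₂, 0]]` in 2×2 blocks. -/
noncomputable def OmegaSp : Matrix (Fin 2 ⊕ Fin 2) (Fin 2 ⊕ Fin 2) ℤ :=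
  Matrix.fromBlocks 0 1 (-1) 0

/-- `M = [[A,B],[C,D]]` (in 2×2 blocks) belongs to `Sp₄(ℤ)`, i.e. `Mᵀ Ω M = Ω`. -/
def IsSp4 (A B C D : Matrix (Fin 2) (Fin 2) ℤ) : Prop :=
  (Matrix.fromBlocks A B C D)ᵀ * OmegaSp * Matrix.fromBlocks A B C D = OmegaSp

/-- An integer 2×2 matrix viewed as a complex matrix. -/
noncomputable def cmat (A : Matrix (Fin 2) (Fin 2) ℤ) : Matrix (Fin 2) (Fin 2) ℂ :=
  A.map (Int.cast : ℤ → ℂ)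

/-- The (entrywise) imaginary part of a complex 2×2 matrix. -/
noncomputable def imPart (Z : Matrix (Fin 2) (Fin 2) ℂ) : Matrix (Fin 2) (Fin 2) ℝ :=
  Z.map Complex.im

/-- The integral quadratic form attached to a real 2×2 matrix `Y`: `p ↦ pᵀ Y p`
for integer vectors `p ∈ ℤ²`. -/
noncomputable def quadForm (Y : Matrix (Fin 2) (Fin 2) ℝ) (p : Fin 2 → ℤ) : ℝ :=
  (fun i => (p i : ℝ)) ⬝ᵥ Y.mulVec (fun i => (p i : ℝ))

/-- The first consecutive minimum `m₁(Y)`. -/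
noncomputable def m1 (Y : Matrix (Fin 2) (Fin 2) ℝ) : ℝ :=
  sInf {r : ℝ | ∃ p : Fin 2 → ℤ, p ≠ 0 ∧ quadForm Y p = r}

/-- The second consecutive minimum `m₂(Y)`: the infimum of `qᵀYq` over integer vectors `q`
linearly independent of a vector `p` attaining `m₁(Y)`. -/
noncomputable def m2 (Y : Matrix (Fin 2) (Fin 2) ℝ) : ℝ :=
  sInf {r : ℝ | ∃ p q : Fin 2 → ℤ, p ≠ 0 ∧ quadForm Y p = m1 Y ∧
    LinearIndependent ℤ ![p, q] ∧ quadForm Y q = r}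

open Filter Set Complex
open scoped ComplexOrder

lemma linearIndependent_rows_iff_det_ne_zero {R m : Type*} [CommRing R] [IsDomain R] [Fintype m]
    [DecidableEq m] {A : Matrix m m R} : LinearIndependent R (fun i => A i) ↔ A.det ≠ 0 := by
  refine ⟨fun h hdet => ?_, linearIndependent_rows_of_det_ne_zero⟩
  obtain ⟨v, hv, hvA⟩ := exists_vecMul_eq_zero_iff.2 hdet
  exact hv <| funext <| Fintype.linearIndependent_iff.1 h v <| by rwa [← vecMul_eq_sum]

lemma adjugate_mulVec_dotProduct_mulVec {R n : Type*} [CommRing R] [Fintype n] [DecidableEq n]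
    (Y : Matrix n n R) (x : n → R) :
    (Y.adjugate *ᵥ x) ⬝ᵥ Y *ᵥ (Y.adjugate *ᵥ x) = Y.det * (x ⬝ᵥ Y.adjugate *ᵥ x) := by
  rw [mulVec_mulVec, mul_adjugate, smul_mulVec, one_mulVec, dotProduct_smul, smul_eq_mul,
    dotProduct_comm]

section BinaryForm

variable {Y : Matrix (Fin 2) (Fin 2) ℝ}

noncomputable def bilinForm (Y : Matrix (Fin 2) (Fin 2) ℝ) (p q : Fin 2 → ℤ) : ℝ :=
  (fun i => (p i : ℝ)) ⬝ᵥ Y *ᵥ (fun i => (q i : ℝ))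

lemma quadForm_pos (hY : Y.PosDef) {p : Fin 2 → ℤ} (hp : p ≠ 0) : 0 < quadForm Y p := by
  have hx : (fun i => (p i : ℝ)) ≠ 0 := fun h => hp <| funext fun i => by simpa using congrFun h i
  have h := hY.dotProduct_mulVec_pos hx
  rw [star_trivial] at h
  exact h

lemma quadForm_smul (k : ℤ) (p : Fin 2 → ℤ) : quadForm Y (k • p) = k ^ 2 * quadForm Y p := by
  simp only [quadForm, dotProduct, mulVec, Fin.sum_univ_two, Pi.smul_apply, smul_eq_mul]
  push_cast
  ring

lemma quadForm_add_smul (hY : Y.IsSymm) (p q : Fin 2 → ℤ) (k : ℤ) :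
    quadForm Y (q + k • p) = quadForm Y q + 2 * k * bilinForm Y p q + k ^ 2 * quadForm Y p := by
  simp only [quadForm, bilinForm, dotProduct, mulVec, Fin.sum_univ_two, Pi.add_apply,
    Pi.smul_apply, smul_eq_mul, hY.apply 0 1]
  push_cast
  ring

lemma quadForm_mul_quadForm_sub_sq (hY : Y.IsSymm) (p q : Fin 2 → ℤ) :
    quadForm Y p * quadForm Y q - bilinForm Y p q ^ 2 =
      ((Matrix.of ![p, q]).det : ℝ) ^ 2 * Y.det := by
  simp only [quadForm, bilinForm, dotProduct, mulVec, Fin.sum_univ_two, det_fin_two, of_apply,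
    Matrix.cons_val_zero, Matrix.cons_val_one, hY.apply 0 1]
  push_cast
  ring

lemma det_mul_sq_add_sq_le (hY : Y.PosDef) (x : Fin 2 → ℝ) :
    Y.det * (x 0 ^ 2 + x 1 ^ 2) ≤ Y.trace * (x ⬝ᵥ Y *ᵥ x) := by
  have hs := (isHermitian_iff_isSymm.1 hY.isHermitian).apply 0 1
  simp only [det_fin_two, trace_fin_two, dotProduct, mulVec, Fin.sum_univ_two, hs]
  -- Cayley–Hamilton: `|Y x|² = tr Y · xᵀ Y x - det Y · |x|²`.
  nlinarith [sq_nonneg (Y 0 0 * x 0 + Y 0 1 * x 1), sq_nonneg (Y 0 1 * x 0 + Y 1 1 * x 1)]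

lemma finite_setOf_quadForm_le (hY : Y.PosDef) (c : ℝ) :
    {p : Fin 2 → ℤ | quadForm Y p ≤ c}.Finite := by
  refine (isCompact_closedBall (0 : Fin 2 → ℤ) √(c * Y.trace / Y.det)).finite_of_discrete.subset
    fun p hp => ?_
  rw [Metric.mem_closedBall, dist_zero_right, pi_norm_le_iff_of_nonneg (Real.sqrt_nonneg _)]
  intro i
  rw [Int.norm_eq_abs]
  apply Real.abs_le_sqrt
  have hsum : (p i : ℝ) ^ 2 ≤ (p 0 : ℝ) ^ 2 + (p 1 : ℝ) ^ 2 := by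
    fin_cases i <;> simp [sq_nonneg]
  have hdet : Y.det * ((p 0 : ℝ) ^ 2 + (p 1 : ℝ) ^ 2) ≤ Y.trace * quadForm Y p :=
    det_mul_sq_add_sq_le hY (fun i => (p i : ℝ))
  rw [le_div_iff₀ hY.det_pos]
  nlinarith [hY.det_pos, mul_le_mul_of_nonneg_left (show quadForm Y p ≤ c from hp) hY.trace_pos.le]

lemma tendsto_quadForm_cofinite (hY : Y.PosDef) : Tendsto (quadForm Y) cofinite atTop :=
  tendsto_atTop.2 fun c => eventually_cofinite.2 <|
    (finite_setOf_quadForm_le hY c).subset fun _ hp => le_of_lt (not_le.1 hp)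

lemma exists_isLeast_image_quadForm (hY : Y.PosDef) {S : Set (Fin 2 → ℤ)} (hS : S.Nonempty) :
    ∃ p ∈ S, IsLeast (quadForm Y '' S) (quadForm Y p) := by
  obtain ⟨p, hpS, hmin⟩ := (tendsto_quadForm_cofinite hY).exists_within_forall_le hS
  exact ⟨p, hpS, mem_image_of_mem _ hpS, forall_mem_image.2 hmin⟩

lemma exists_quadForm_eq_m1 (hY : Y.PosDef) : ∃ p ≠ 0, quadForm Y p = m1 Y := by
  obtain ⟨p, hp, hleast⟩ := exists_isLeast_image_quadForm hY (S := {p | p ≠ 0})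
    ⟨Pi.single 0 1, by simp⟩
  exact ⟨p, hp, hleast.csInf_eq.symm⟩

lemma m1_le_quadForm (hY : Y.PosDef) {p : Fin 2 → ℤ} (hp : p ≠ 0) : m1 Y ≤ quadForm Y p :=
  csInf_le ⟨0, by rintro _ ⟨q, hq, rfl⟩; exact (quadForm_pos hY hq).le⟩ ⟨p, hp, rfl⟩

lemma m1_pos (hY : Y.PosDef) : 0 < m1 Y := by
  obtain ⟨p, hp, hpm⟩ := exists_quadForm_eq_m1 hY
  exact hpm ▸ quadForm_pos hY hp

lemma m2_le_quadForm (hY : Y.PosDef) {p q : Fin 2 → ℤ} (hpm : quadForm Y p = m1 Y)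
    (hpq : LinearIndependent ℤ ![p, q]) : m2 Y ≤ quadForm Y q :=
  csInf_le ⟨0, by rintro _ ⟨_p, q, -, -, hq, rfl⟩; exact (quadForm_pos hY (hq.ne_zero 1)).le⟩
    ⟨p, q, hpq.ne_zero 0, hpm, hpq, rfl⟩

lemma isCoprime_of_quadForm_eq_m1 (hY : Y.PosDef) {p : Fin 2 → ℤ} (hp : p ≠ 0)
    (hpm : quadForm Y p = m1 Y) : IsCoprime (p 0) (p 1) := by
  have hgcd : 0 < Int.gcd (p 0) (p 1) := Int.gcd_pos_iff.2 <| by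
    contrapose! hp
    exact funext fun i => by fin_cases i <;> simp [hp]
  obtain ⟨g, a, b, hg0, hab, h0, h1⟩ := Int.exists_gcd_one' hgcd
  have hp_eq : p = (g : ℤ) • ![a, b] := funext fun i => by fin_cases i <;> simp [h0, h1, mul_comm]
  have hab0 : ![a, b] ≠ 0 := by
    rintro h
    exact hp (by rw [hp_eq, h, smul_zero])
  have hmin : (g : ℝ) ^ 2 * quadForm Y ![a, b] ≤ quadForm Y ![a, b] := by
    rw [← Int.cast_natCast, ← quadForm_smul, ← hp_eq, hpm]
    exact m1_le_quadForm hY hab0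
  have hg : g = 1 := by
    have hg2 : (g : ℝ) ^ 2 ≤ 1 :=
      le_of_mul_le_mul_right (by simpa using hmin) (quadForm_pos hY hab0)
    have : g ^ 2 ≤ 1 := by exact_mod_cast hg2
    nlinarith
  rw [Int.isCoprime_iff_gcd_eq_one, h0, h1, hg]
  simpa using hab

lemma exists_quadForm_eq_m1_det_eq_one (hY : Y.PosDef) :
    ∃ p q : Fin 2 → ℤ, quadForm Y p = m1 Y ∧ (Matrix.of ![p, q]).det = 1 := by
  obtain ⟨p, hp, hpm⟩ := exists_quadForm_eq_m1 hY
  obtain ⟨u, v, huv⟩ := isCoprime_of_quadForm_eq_m1 hY hp hpm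
  refine ⟨p, ![-v, u], hpm, ?_⟩
  simp only [det_fin_two, of_apply, cons_val_zero, cons_val_one]
  linear_combination huv

lemma linearIndependent_of_det_eq_one {p q : Fin 2 → ℤ} (h : (Matrix.of ![p, q]).det = 1) :
    LinearIndependent ℤ ![p, q] :=
  linearIndependent_rows_of_det_ne_zero (A := Matrix.of ![p, q]) (by simp [h])

lemma m1_mul_m2_le (hY : Y.PosDef) : m1 Y * m2 Y ≤ 4 / 3 * Y.det := by
  have hsymm : Y.IsSymm := isHermitian_iff_isSymm.1 hY.isHermitian
  obtain ⟨p, q₀, hpm, hq₀⟩ := exists_quadForm_eq_m1_det_eq_one hY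
  -- Among all `q` completing `p` to a basis of determinant one, pick one minimising `Y[q]`;
  -- its minimality against `q ± p` makes the pair `(p, q)` reduced.
  obtain ⟨q, hq, hleast⟩ :=
    exists_isLeast_image_quadForm hY (S := {q | (Matrix.of ![p, q]).det = 1}) ⟨q₀, hq₀⟩
  have hshift : ∀ k : ℤ, quadForm Y q ≤ quadForm Y (q + k • p) := fun k => by
    refine hleast.2 (mem_image_of_mem _ (show (Matrix.of ![p, q + k • p]).det = 1 from ?_))
    simp only [det_fin_two, of_apply, cons_val_zero, cons_val_one, Pi.add_apply, Pi.smul_apply,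
      smul_eq_mul, mem_ofPred_eq] at hq ⊢
    linear_combination hq
  have hli := linearIndependent_of_det_eq_one hq
  have hplus := hshift 1
  have hminus := hshift (-1)
  rw [quadForm_add_smul hsymm] at hplus hminus
  have hgram := quadForm_mul_quadForm_sub_sq hsymm p q
  have hm1q : m1 Y ≤ quadForm Y q := m1_le_quadForm hY (hli.ne_zero 1)
  have hm2 : m2 Y ≤ quadForm Y q := m2_le_quadForm hY hpm hli
  rw [hq, hpm] at hgram
  rw [hpm] at hplus hminus
  push_cast at hplus hminus hgram
  have hm1 := m1_pos hY
  nlinarith [mul_nonneg (by linarith : 0 ≤ m1 Y + 2 * bilinForm Y p q)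
    (by linarith : 0 ≤ m1 Y - 2 * bilinForm Y p q), mul_le_mul_of_nonneg_left hm1q hm1.le,
    mul_le_mul_of_nonneg_left hm2 hm1.le]

lemma det_le_m1_mul_m2 (hY : Y.PosDef) : Y.det ≤ m1 Y * m2 Y := by
  have hsymm : Y.IsSymm := isHermitian_iff_isSymm.1 hY.isHermitian
  have hm1 := m1_pos hY
  rw [← div_le_iff₀' hm1]
  obtain ⟨p₀, q₀, hp₀m, hq₀⟩ := exists_quadForm_eq_m1_det_eq_one hY
  have hli₀ := linearIndependent_of_det_eq_one hq₀
  refine le_csInf ⟨_, p₀, q₀, hli₀.ne_zero 0, hp₀m, hli₀, rfl⟩ ?_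
  rintro _ ⟨p, q, -, hpm, hli, rfl⟩
  rw [div_le_iff₀' hm1, ← hpm]
  have hdet : (1 : ℝ) ≤ ((Matrix.of ![p, q]).det : ℝ) ^ 2 := by
    have := (linearIndependent_rows_iff_det_ne_zero (A := Matrix.of ![p, q])).1 hli
    rw [← sq_abs, ← Int.cast_abs]
    exact_mod_cast one_le_pow₀ (Int.one_le_abs this)
  nlinarith [quadForm_mul_quadForm_sub_sq hsymm p q, sq_nonneg (bilinForm Y p q), hY.det_pos]

lemma m2_le_of_det_le (hY : Y.PosDef) {c : ℝ} (h : Y.det ≤ m1 Y * c) : m2 Y ≤ 4 / 3 * c := by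
  have hm1 := m1_pos hY
  nlinarith [m1_mul_m2_le hY]

lemma quadForm_adjugate (v : Fin 2 → ℤ) :
    quadForm Y.adjugate v = quadForm Y ![v 1, -v 0] := by
  simp [quadForm, adjugate_fin_two, dotProduct, mulVec, Fin.sum_univ_two]
  ring

lemma m2_pos (hY : Y.PosDef) : 0 < m2 Y :=
  pos_of_mul_pos_right (hY.det_pos.trans_le (det_le_m1_mul_m2 hY)) (m1_pos hY).le

lemma det_le_quadForm_mul_m2 (hY : Y.PosDef) {w : Fin 2 → ℤ} (hw : w ≠ 0) :
    Y.det ≤ quadForm Y w * m2 Y :=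
  (det_le_m1_mul_m2 hY).trans (mul_le_mul_of_nonneg_right (m1_le_quadForm hY hw) (m2_pos hY).le)

lemma det_mul_m1_le_adjugate (hY : Y.PosDef) {v : Fin 2 → ℤ} (hv : v ≠ 0) :
    Y.det * m1 Y ≤
      (Y.adjugate *ᵥ fun i => (v i : ℝ)) ⬝ᵥ Y *ᵥ (Y.adjugate *ᵥ fun i => (v i : ℝ)) := by
  rw [adjugate_mulVec_dotProduct_mulVec]
  change _ ≤ Y.det * quadForm Y.adjugate v
  rw [quadForm_adjugate]
  refine mul_le_mul_of_nonneg_left (m1_le_quadForm hY fun h => hv ?_) hY.det_pos.le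
  funext i
  fin_cases i
  · simpa using congrFun h 1
  · simpa using congrFun h 0

end BinaryForm

lemma Matrix.IsSymm.conjTranspose_sub_self {n : Type*} {Z : Matrix n n ℂ} (hZ : Z.IsSymm) :
    Zᴴ - Z = (-(2 * I)) • (Z.map im).map ofReal := by
  ext i j
  rw [Matrix.sub_apply, conjTranspose_apply, hZ.apply]
  apply Complex.ext <;> simp
  ring

section Complexification

variable {n : Type*} [Fintype n]

lemma re_star_dotProduct_map_ofReal_mulVec (M : Matrix n n ℝ) (s : n → ℂ) :
    (star s ⬝ᵥ M.map ofReal *ᵥ s).re =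
      (fun i => (s i).re) ⬝ᵥ M *ᵥ (fun i => (s i).re) +
        (fun i => (s i).im) ⬝ᵥ M *ᵥ (fun i => (s i).im) := by
  simp only [dotProduct, mulVec, Finset.mul_sum, ← Finset.sum_add_distrib, re_sum, map_apply,
    Pi.star_apply, star_def, mul_re, conj_re, conj_im, ofReal_re, ofReal_im, mul_im]
  refine Finset.sum_congr rfl fun i _ => Finset.sum_congr rfl fun j _ => ?_
  ring

lemma posDef_map_ofReal_iff {M : Matrix n n ℝ} : (M.map ofReal).PosDef ↔ M.PosDef := by
  have hstar : Function.Semiconj ofReal star star := fun x => (conj_ofReal x).symm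
  simp only [posDef_iff_dotProduct_mulVec, isHermitian_map_iff hstar ofReal_injective]
  refine and_congr_right fun hM => ⟨fun h x hx => ?_, fun h s hs => ?_⟩
  · have hxc : (fun i => (x i : ℂ)) ≠ 0 := fun h0 =>
      hx (funext fun i => by simpa using congrFun h0 i)
    have := (pos_iff.1 (h hxc)).1
    simpa [re_star_dotProduct_map_ofReal_mulVec] using this
  · rw [pos_iff, re_star_dotProduct_map_ofReal_mulVec]
    refine ⟨?_, ((hM.map ofReal hstar).im_star_dotProduct_mulVec_self s).symm⟩
    have hnonneg : ∀ x : n → ℝ, 0 ≤ x ⬝ᵥ M *ᵥ x := fun x => by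
      rcases eq_or_ne x 0 with rfl | hx
      · simp
      · simpa using (h hx).le
    by_cases hre : (fun i => (s i).re) = 0
    · have him : (fun i => (s i).im) ≠ 0 := fun him =>
        hs (funext fun i => Complex.ext (congrFun hre i) (congrFun him i))
      simpa [hre] using h him
    · have := h hre
      rw [star_trivial] at this
      linarith [hnonneg fun i => (s i).im]

variable [DecidableEq n]

lemma normSq_det_mul_star_dotProduct_mulVec (P W : Matrix n n ℂ) (x : n → ℂ) :
    (normSq P.det : ℂ) * (star x ⬝ᵥ W *ᵥ x) =
      star (P.adjugate *ᵥ x) ⬝ᵥ (Pᴴ * W * P) *ᵥ (P.adjugate *ᵥ x) := by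
  have hPs : P *ᵥ (P.adjugate *ᵥ x) = P.det • x := by
    rw [mulVec_mulVec, mul_adjugate, smul_mulVec, one_mulVec]
  rw [← mulVec_mulVec, ← mulVec_mulVec, dotProduct_mulVec _ Pᴴ, ← star_mulVec, hPs, star_smul,
    mulVec_smul, smul_dotProduct, dotProduct_smul, smul_eq_mul, smul_eq_mul,
    normSq_eq_conj_mul_self, star_def]
  ring

lemma det_map_ofReal (M : Matrix n n ℝ) :
    (M.map ofReal).det = M.det :=
  (ofRealHom.map_det M).symm

end Complexification

section Symplectic

variable {R n : Type*} [CommRing R] [Fintype n] [DecidableEq n] {A B C D : Matrix n n R}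

def IsSymplectic (A B C D : Matrix n n R) : Prop :=
  (fromBlocks A B C D)ᵀ * fromBlocks 0 1 (-1) 0 * fromBlocks A B C D = fromBlocks 0 1 (-1) 0

lemma IsSymplectic.transpose_relations (h : IsSymplectic A B C D) :
    Aᵀ * C = Cᵀ * A ∧ Bᵀ * D = Dᵀ * B ∧ Aᵀ * D - Cᵀ * B = 1 := by
  simp only [IsSymplectic, fromBlocks_transpose, fromBlocks_multiply, Matrix.mul_zero,
    Matrix.mul_one, Matrix.mul_neg, Matrix.neg_mul, zero_add, add_zero] at h
  obtain ⟨h₁₁, h₁₂, -, h₂₂⟩ := fromBlocks_inj.1 h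
  refine ⟨?_, ?_, ?_⟩
  · linear_combination (norm := abel) h₁₁
  · linear_combination (norm := abel) h₂₂
  · linear_combination (norm := abel) h₁₂

lemma IsSymplectic.transpose_mul_sub (h : IsSymplectic A B C D) (W W' : Matrix n n R) :
    (A * W' + B)ᵀ * (C * W + D) - (C * W' + D)ᵀ * (A * W + B) = W'ᵀ - W := by
  obtain ⟨hAC, hBD, hAD⟩ := h.transpose_relations
  have hDA : Dᵀ * A - Bᵀ * C = 1 := by
    simpa [transpose_sub, transpose_mul] using congrArg transpose hAD
  calc (A * W' + B)ᵀ * (C * W + D) - (C * W' + D)ᵀ * (A * W + B)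
      = W'ᵀ * (Aᵀ * C - Cᵀ * A) * W + W'ᵀ * (Aᵀ * D - Cᵀ * B) - (Dᵀ * A - Bᵀ * C) * W
          + (Bᵀ * D - Dᵀ * B) := by
        simp only [transpose_add, transpose_mul]
        noncomm_ring
    _ = W'ᵀ - W := by simp [hAC, hBD, hAD, hDA]

end Symplectic

lemma adjugate_add_fin_two {R : Type*} [CommRing R] (M N : Matrix (Fin 2) (Fin 2) R) :
    (M + N).adjugate = M.adjugate + N.adjugate := by
  ext i j
  fin_cases i <;> fin_cases j <;> simp [adjugate_fin_two] <;> ring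

lemma adjugate_cmat_mulVec (C : Matrix (Fin 2) (Fin 2) ℤ) (u : Fin 2 → ℤ) :
    (cmat C).adjugate *ᵥ (fun i => (u i : ℂ)) = fun i => ((C.adjugate *ᵥ u) i : ℂ) := by
  have h : (cmat C).adjugate = C.adjugate.map Int.cast :=
    ((Int.castRingHom ℂ).map_adjugate C).symm
  funext i
  rw [h]
  exact ((Int.castRingHom ℂ).map_mulVec C.adjugate u i).symm

lemma im_adjugate_mulVec_add (Z : Matrix (Fin 2) (Fin 2) ℂ) (v w : Fin 2 → ℤ) :
    (fun i => ((Z.adjugate *ᵥ (fun j => (v j : ℂ)) + fun j => (w j : ℂ)) i).im) =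
      (imPart Z).adjugate *ᵥ fun j => (v j : ℝ) := by
  funext i
  fin_cases i <;> simp [adjugate_fin_two, mulVec, dotProduct, Fin.sum_univ_two, imPart]

lemma det_le_re_star_dotProduct_mul_max {Z : Matrix (Fin 2) (Fin 2) ℂ} (hY : (imPart Z).PosDef)
    {v w : Fin 2 → ℤ} {s : Fin 2 → ℂ}
    (hs_eq : s = Z.adjugate *ᵥ (fun j => (v j : ℂ)) + fun j => (w j : ℂ)) (hs : s ≠ 0) :
    (imPart Z).det ≤
      (star s ⬝ᵥ (imPart Z).map ofReal *ᵥ s).re * max (m1 (imPart Z))⁻¹ (m2 (imPart Z)) := by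
  set Y := imPart Z
  have hnonneg : ∀ x : Fin 2 → ℝ, 0 ≤ x ⬝ᵥ Y *ᵥ x := fun x => by
    simpa using hY.posSemidef.dotProduct_mulVec_nonneg x
  rw [re_star_dotProduct_map_ofReal_mulVec]
  rcases eq_or_ne v 0 with rfl | hv
  · have hcast : (fun j => ((0 : Fin 2 → ℤ) j : ℂ)) = 0 := by
      funext j
      simp
    rw [hcast, mulVec_zero, zero_add] at hs_eq
    have hw : w ≠ 0 := by
      rintro rfl
      exact hs (hs_eq.trans hcast)
    have hre : (fun i => (s i).re) = fun i => (w i : ℝ) := by simp [hs_eq]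
    have him : (fun i => (s i).im) = 0 := by
      funext i
      simp [hs_eq]
    rw [hre, him, zero_dotProduct, add_zero]
    exact (det_le_quadForm_mul_m2 hY hw).trans <|
      mul_le_mul_of_nonneg_left (le_max_right _ _) (hnonneg _)
  · rw [hs_eq, im_adjugate_mulVec_add, ← hs_eq]
    set a := (fun i => (s i).re) ⬝ᵥ Y *ᵥ fun i => (s i).re
    set b := (Y.adjugate *ᵥ fun j => (v j : ℝ)) ⬝ᵥ Y *ᵥ (Y.adjugate *ᵥ fun j => (v j : ℝ))
    have hab : Y.det * m1 Y ≤ a + b := by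
      linarith [det_mul_m1_le_adjugate hY hv, hnonneg fun i => (s i).re]
    calc Y.det = Y.det * m1 Y * (m1 Y)⁻¹ := by field_simp [(m1_pos hY).ne']
      _ ≤ (a + b) * (m1 Y)⁻¹ := mul_le_mul_of_nonneg_right hab (inv_nonneg.2 (m1_pos hY).le)
      _ ≤ (a + b) * max (m1 Y)⁻¹ (m2 Y) :=
          mul_le_mul_of_nonneg_left (le_max_left _ _) (add_nonneg (hnonneg _) (hnonneg _))

noncomputable def siegelAction (A B C D : Matrix (Fin 2) (Fin 2) ℤ)
    (Z : Matrix (Fin 2) (Fin 2) ℂ) : Matrix (Fin 2) (Fin 2) ℂ :=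
  (cmat A * Z + cmat B) * (cmat C * Z + cmat D)⁻¹

section Siegel

variable {A B C D : Matrix (Fin 2) (Fin 2) ℤ} {Z : Matrix (Fin 2) (Fin 2) ℂ}

lemma IsSp4.isSymplectic_cmat (hM : IsSp4 A B C D) :
    IsSymplectic (cmat A) (cmat B) (cmat C) (cmat D) := by
  have := congrArg (Int.castRingHom ℂ).mapMatrix hM
  rw [map_mul, map_mul] at this
  simpa [IsSymplectic, cmat, OmegaSp, fromBlocks_map, transpose_map, Matrix.map_neg,
    Matrix.map_one] using this

lemma conjTranspose_cmat_mul_add (A B : Matrix (Fin 2) (Fin 2) ℤ) (Z : Matrix (Fin 2) (Fin 2) ℂ) :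
    (cmat A * Z + cmat B)ᴴ = (cmat A * Z.map star + cmat B)ᵀ := by
  ext i j
  simp [cmat, mul_apply]

lemma conjTranspose_mul_sub_conjTranspose_mul (hM : IsSp4 A B C D) (Z : Matrix (Fin 2) (Fin 2) ℂ) :
    (cmat A * Z + cmat B)ᴴ * (cmat C * Z + cmat D) -
      (cmat C * Z + cmat D)ᴴ * (cmat A * Z + cmat B) = Zᴴ - Z := by
  rw [conjTranspose_cmat_mul_add, conjTranspose_cmat_mul_add]
  exact hM.isSymplectic_cmat.transpose_mul_sub Z (Z.map star)

lemma isUnit_cmat_mul_add (hM : IsSp4 A B C D) (hsymm : Z.IsSymm) (hY : (imPart Z).PosDef) :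
    IsUnit (cmat C * Z + cmat D) := by
  rw [isUnit_iff_isUnit_det, isUnit_iff_ne_zero]
  intro hdet
  obtain ⟨v, hv, hPv⟩ := exists_mulVec_eq_zero_iff.2 hdet
  set P := cmat C * Z + cmat D
  set Q := cmat A * Z + cmat B
  have h : star v ⬝ᵥ (Qᴴ * P - Pᴴ * Q) *ᵥ v = star v ⬝ᵥ (Zᴴ - Z) *ᵥ v := by
    rw [conjTranspose_mul_sub_conjTranspose_mul hM Z]
  have h₁ : (Qᴴ * P) *ᵥ v = 0 := by rw [← mulVec_mulVec, hPv, mulVec_zero]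
  have h₂ : star v ⬝ᵥ (Pᴴ * Q) *ᵥ v = 0 := by
    rw [← mulVec_mulVec, dotProduct_mulVec, ← star_mulVec, hPv, star_zero, zero_dotProduct]
  simp only [sub_mulVec, dotProduct_sub, h₁, h₂, dotProduct_zero, sub_zero,
    hsymm.conjTranspose_sub_self, smul_mulVec, dotProduct_smul, smul_eq_mul] at h
  have hpos := (posDef_map_ofReal_iff.2 hY).dotProduct_mulVec_pos hv
  rcases (mul_eq_zero.1 h.symm) with h | h
  · simp at h
  · exact hpos.ne' h

lemma transpose_mul_comm_of_isSymm (hM : IsSp4 A B C D) (hsymm : Z.IsSymm) :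
    (cmat A * Z + cmat B)ᵀ * (cmat C * Z + cmat D) =
      (cmat C * Z + cmat D)ᵀ * (cmat A * Z + cmat B) :=
  sub_eq_zero.1 <| (hM.isSymplectic_cmat.transpose_mul_sub Z Z).trans <| by
    rw [hsymm.eq, sub_self]

lemma isSymm_siegelAction (hM : IsSp4 A B C D) (hsymm : Z.IsSymm) (hY : (imPart Z).PosDef) :
    (siegelAction A B C D Z).IsSymm := by
  unfold siegelAction
  set P := cmat C * Z + cmat D
  set Q := cmat A * Z + cmat B
  have hP := isUnit_cmat_mul_add hM hsymm hY
  have hPinv : P⁻¹ * P = 1 := nonsing_inv_mul P ((isUnit_iff_isUnit_det _).1 hP)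
  refine ((isUnit_transpose P).2 hP).mul_left_cancel (hP.mul_right_cancel ?_)
  calc Pᵀ * (Q * P⁻¹)ᵀ * P = (P⁻¹ * P)ᵀ * Qᵀ * P := by
        simp only [transpose_mul, Matrix.mul_assoc]
    _ = Pᵀ * (Q * P⁻¹) * P := by
        rw [hPinv, transpose_one, Matrix.one_mul, transpose_mul_comm_of_isSymm hM hsymm,
          Matrix.mul_assoc, Matrix.mul_assoc, hPinv, Matrix.mul_one]

lemma conjTranspose_mul_imPart_siegelAction_mul (hM : IsSp4 A B C D) (hsymm : Z.IsSymm)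
    (hY : (imPart Z).PosDef) :
    (cmat C * Z + cmat D)ᴴ * (imPart (siegelAction A B C D Z)).map ofReal * (cmat C * Z + cmat D) =
      (imPart Z).map ofReal := by
  have hsymm' := isSymm_siegelAction hM hsymm hY
  unfold siegelAction at hsymm' ⊢
  set P := cmat C * Z + cmat D
  set Q := cmat A * Z + cmat B
  have hZ'P : Q * P⁻¹ * P = Q := by
    rw [Matrix.mul_assoc, nonsing_inv_mul P ((isUnit_iff_isUnit_det _).1
      (isUnit_cmat_mul_add hM hsymm hY)), Matrix.mul_one]
  refine smul_right_injective _ (show -(2 * I) ≠ 0 by simp) ?_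
  calc -(2 * I) • (Pᴴ * (imPart (Q * P⁻¹)).map ofReal * P)
      = Pᴴ * ((Q * P⁻¹)ᴴ - Q * P⁻¹) * P := by
        rw [hsymm'.conjTranspose_sub_self, Matrix.mul_smul,
          Matrix.smul_mul, imPart]
    _ = Qᴴ * P - Pᴴ * Q := by
        rw [Matrix.mul_sub, Matrix.sub_mul, ← conjTranspose_mul, hZ'P, Matrix.mul_assoc, hZ'P]
    _ = -(2 * I) • (imPart Z).map ofReal := by
        rw [conjTranspose_mul_sub_conjTranspose_mul hM Z, hsymm.conjTranspose_sub_self, imPart]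

lemma posDef_imPart_siegelAction (hM : IsSp4 A B C D) (hsymm : Z.IsSymm)
    (hY : (imPart Z).PosDef) :
    (imPart (siegelAction A B C D Z)).PosDef := by
  refine posDef_map_ofReal_iff.1 <|
    (IsUnit.posDef_star_left_conjugate_iff (isUnit_cmat_mul_add hM hsymm hY)).1 ?_
  rw [star_eq_conjTranspose, conjTranspose_mul_imPart_siegelAction_mul hM hsymm hY]
  exact posDef_map_ofReal_iff.2 hY

lemma det_imPart_siegelAction_le (hM : IsSp4 A B C D) (hsymm : Z.IsSymm) (hY : (imPart Z).PosDef)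
    {u : Fin 2 → ℤ} (hu : u ≠ 0) :
    (imPart (siegelAction A B C D Z)).det ≤
      quadForm (imPart (siegelAction A B C D Z)) u * max (m1 (imPart Z))⁻¹ (m2 (imPart Z)) := by
  have hrel := conjTranspose_mul_imPart_siegelAction_mul hM hsymm hY
  set P := cmat C * Z + cmat D
  set Y' := imPart (siegelAction A B C D Z)
  have hdetP : P.det ≠ 0 := ((isUnit_iff_isUnit_det _).1 (isUnit_cmat_mul_add hM hsymm hY)).ne_zero
  have hdet : normSq P.det * Y'.det = (imPart Z).det := by
    have h := congrArg det hrel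
    rw [det_mul, det_mul, det_conjTranspose, det_map_ofReal, det_map_ofReal] at h
    rw [← ofReal_inj, ofReal_mul, normSq_eq_conj_mul_self, ← h, star_def]
    ring
  set s := P.adjugate *ᵥ fun i => (u i : ℂ)
  have hval : normSq P.det * quadForm Y' u = (star s ⬝ᵥ (imPart Z).map ofReal *ᵥ s).re := by
    rw [← hrel, ← normSq_det_mul_star_dotProduct_mulVec, re_ofReal_mul,
      re_star_dotProduct_map_ofReal_mulVec]
    simp [quadForm]
  have hs_eq : s = Z.adjugate *ᵥ (fun j => ((C.adjugate *ᵥ u) j : ℂ)) +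
      fun j => ((D.adjugate *ᵥ u) j : ℂ) := by
    rw [← adjugate_cmat_mulVec, ← adjugate_cmat_mulVec, mulVec_mulVec, ← add_mulVec,
      ← adjugate_mul_distrib, ← adjugate_add_fin_two]
  have hs : s ≠ 0 := fun h0 => hu <| by
    have h := congrArg (P *ᵥ ·) h0
    simp only [s, mulVec_mulVec, mul_adjugate, smul_mulVec, one_mulVec, mulVec_zero] at h
    funext i
    simpa [hdetP] using congrFun h i
  have key := det_le_re_star_dotProduct_mul_max hY hs_eq hs
  rw [← hval, ← hdet, mul_assoc] at key
  exact le_of_mul_le_mul_left key (normSq_pos.2 hdetP)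

end Siegel

/-- for `Z = X + iY ∈ H₂` and `M = [[A,B],[C,D]] ∈ Sp₄(ℤ)`, the imaginary part of
`M(Z) = (AZ+B)(CZ+D)⁻¹` is positive definite and
`m₂(Im M(Z)) ≤ (4/3)·max{m₁(Y)⁻¹, m₂(Y)}`. -/
theorem stmt_7 (Z : Matrix (Fin 2) (Fin 2) ℂ) (hsymm : Z.IsSymm) (hposdef : (imPart Z).PosDef)
    (A B C D : Matrix (Fin 2) (Fin 2) ℤ) (hM : IsSp4 A B C D) :
    (imPart ((cmat A * Z + cmat B) * (cmat C * Z + cmat D)⁻¹)).PosDef ∧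
    m2 (imPart ((cmat A * Z + cmat B) * (cmat C * Z + cmat D)⁻¹)) ≤
      4 / 3 * max (m1 (imPart Z))⁻¹ (m2 (imPart Z)) := by
  have hY' := posDef_imPart_siegelAction hM hsymm hposdef
  refine ⟨hY', m2_le_of_det_le hY' ?_⟩
  obtain ⟨u, hu, hum⟩ := exists_quadForm_eq_m1 hY'
  exact hum ▸ det_imPart_siegelAction_le hM hsymm hposdef hu
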